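/- arXiv:2407.04555 — 12 statements merged into one kernel-verified Lean document; each statement's English description precedes it below -/
import Mathlib

section
/- For integers j ≤ n with j, n ≥ 0, the binomial coefficient C(n, j) equals the alternating sum over i from 0 to j of (-1)^i * (n + j - 2i)/(n - i) * C(n - i, j - i), where the term for i = j = n is interpreted as (-1)^j. -/
/-!
Since `(n + j - 2i)/(n - i) = 1 + (j - i)/(n - i)` and
`(j - i)/(n - i) * C(n - i, j - i) = C(n - i - 1, j - i - 1)`, for `i < j` the `i`-th summand is
`b i - b (i + 1)` with `b i = (-1)^i C(n - i, j - i)`. The summands with `i < j` therefore telescope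
to `C(n, j) - (-1)^j`, and the last summand is `(-1)^j`.
-/

open Finset

theorem add_div_mul_choose_succ {K : Type*} [Field K] [CharZero K] (m k : ℕ) :
    ((m + 1 + (k + 1) : K) / (m + 1)) * ((m + 1).choose (k + 1) : K) =
      (m + 1).choose (k + 1) + m.choose k := by
  have h : ((m + 1 : ℕ) * m.choose k : K) = ((m + 1).choose (k + 1) * (k + 1 : ℕ) : K) := by
    exact_mod_cast Nat.add_one_mul_choose_eq m k
  push_cast at h
  rw [div_mul_eq_mul_div, div_eq_iff (Nat.cast_add_one_ne_zero m)]
  linear_combination -h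

def alternatingChooseTerm (n j i : ℕ) : ℚ :=
  if i = n then (-1 : ℚ) ^ j
  else (-1 : ℚ) ^ i * (((n : ℚ) + j - 2 * i) / ((n : ℚ) - i)) * ((n - i).choose (j - i) : ℚ)

theorem alternatingChooseTerm_self (n j : ℕ) :
    alternatingChooseTerm n j j = (-1) ^ j := by
  unfold alternatingChooseTerm
  split_ifs with hjn
  · rfl
  · have hne : (n : ℚ) - j ≠ 0 := sub_ne_zero.mpr (by exact_mod_cast Ne.symm hjn)
    rw [show (n : ℚ) + j - 2 * j = n - j by ring, div_self hne]
    simp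

theorem alternatingChooseTerm_of_lt {n j i : ℕ} (hij : i < j) (h : j ≤ n) :
    alternatingChooseTerm n j i =
      (-1) ^ i * ((n - i).choose (j - i) : ℚ) -
        (-1) ^ (i + 1) * ((n - (i + 1)).choose (j - (i + 1)) : ℚ) := by
  obtain ⟨k, rfl⟩ : ∃ k, j = i + k + 1 := ⟨j - i - 1, by omega⟩
  obtain ⟨m, rfl⟩ : ∃ m, n = i + m + 1 := ⟨n - i - 1, by omega⟩
  have hsub (a : ℕ) : i + a + 1 - i = a + 1 ∧ i + a + 1 - (i + 1) = a := ⟨by omega, by omega⟩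
  rw [alternatingChooseTerm, if_neg (by omega), (hsub m).1, (hsub k).1, (hsub m).2, (hsub k).2,
    mul_assoc]
  push_cast
  rw [show (i + m + 1 : ℚ) + (i + k + 1) - 2 * i = m + 1 + (k + 1) by ring,
    show (i + m + 1 : ℚ) - i = m + 1 by ring, add_div_mul_choose_succ]
  ring

/-- For integers `j ≤ n`, `C(n, j) = ∑_{i=0}^{j} (-1)^i * (n + j - 2i)/(n - i) * C(n - i, j - i)`,
where the term for `i = j = n` is interpreted as `(-1)^j`. -/
theorem stmt0 (n j : ℕ) (h : j ≤ n) :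
    (Nat.choose n j : ℚ) =
      ∑ i ∈ Finset.range (j + 1),
        if i = n then (-1 : ℚ) ^ j
        else (-1 : ℚ) ^ i * (((n : ℚ) + j - 2 * i) / ((n : ℚ) - i)) *
          (Nat.choose (n - i) (j - i) : ℚ) := by
  change _ = ∑ i ∈ range (j + 1), alternatingChooseTerm n j i
  have telescope : ∑ i ∈ range j, alternatingChooseTerm n j i = n.choose j - (-1) ^ j := by
    rw [sum_congr rfl fun i hi => alternatingChooseTerm_of_lt (mem_range.mp hi) h,
      sum_range_sub' (fun i => (-1 : ℚ) ^ i * ((n - i).choose (j - i) : ℚ))]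
    simp
  rw [sum_range_succ, telescope, alternatingChooseTerm_self]
  ring
end

section
/- For integers k > 2j ≥ 0, the sum over i from 0 to j of (-1)^i * (k - 2i)/(k - j - i) * C(k - j - i, j - i) equals C(k - j, j). -/
/-!
Put `g i = (-1)^i * C(k - j - i, j - i)`. With `m = k - j - i` and `r = j - i`, the summand is
`(-1)^i * (m + r)/m * C(m, r)`; for `r ≥ 1` the absorption identity
`r * C(m, r) = m * C(m-1, r-1)` turns it into `(-1)^i * (C(m, r) + C(m-1, r-1)) = g i - g (i+1)`.
So the sum telescopes to `g 0 - g j` plus the last summand `(-1)^j`, which cancels `g j`,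
leaving `g 0 = C(k - j, j)`.
-/

open Finset

theorem add_div_mul_choose_eq_choose_add_choose {K : Type*} [Field K] [CharZero K] (m r : ℕ) :
    ((m + 1 + (r + 1) : K) / (m + 1)) * ((m + 1).choose (r + 1) : K)
      = ((m + 1).choose (r + 1) : K) + (m.choose r : K) := by
  have absorb : ((m + 1 : ℕ) : K) * m.choose r = (m + 1).choose (r + 1) * (r + 1 : ℕ) := by
    exact_mod_cast Nat.add_one_mul_choose_eq m r
  push_cast at absorb
  field_simp
  linear_combination -absorb

/-- For integers `k > 2j ≥ 0`,
`∑_{i=0}^{j} (-1)^i * (k - 2i)/(k - j - i) * C(k - j - i, j - i) = C(k - j, j)`. -/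
theorem stmt1 (k j : ℕ) (h : 2 * j < k) :
    ∑ i ∈ Finset.range (j + 1),
        (-1 : ℚ) ^ i * (((k : ℚ) - 2 * i) / ((k : ℚ) - j - i)) *
          (Nat.choose (k - j - i) (j - i) : ℚ)
      = (Nat.choose (k - j) j : ℚ) := by
  set f : ℕ → ℚ := fun i => (-1 : ℚ) ^ i * (((k : ℚ) - 2 * i) / ((k : ℚ) - j - i)) *
    (Nat.choose (k - j - i) (j - i) : ℚ)
  set g : ℕ → ℚ := fun i => (-1) ^ i * (Nat.choose (k - j - i) (j - i) : ℚ)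
  have telescope : ∀ i ∈ range j, f i = g i - g (i + 1) := by
    intro i hi
    obtain ⟨r, rfl⟩ : ∃ r, j = i + r + 1 := ⟨j - i - 1, by grind⟩
    obtain ⟨m, rfl⟩ : ∃ m, k = 2 * i + r + m + 2 := ⟨k - 2 * i - r - 2, by omega⟩
    simp only [f, g, show 2 * i + r + m + 2 - (i + r + 1) - i = m + 1 by omega,
      show 2 * i + r + m + 2 - (i + r + 1) - (i + 1) = m by omega,
      show i + r + 1 - i = r + 1 by omega, show i + r + 1 - (i + 1) = r by omega]
    push_cast
    linear_combination (-1 : ℚ) ^ i * add_div_mul_choose_eq_choose_add_choose (K := ℚ) m r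
  have last : f j = g j := by
    have hne : (k : ℚ) - 2 * j ≠ 0 := by
      rw [sub_ne_zero]; exact_mod_cast h.ne'
    simp [f, g, show (k : ℚ) - j - j = k - 2 * j by ring, div_self hne]
  show ∑ i ∈ range (j + 1), f i = _
  rw [sum_range_succ, sum_congr rfl telescope, sum_range_sub', last]
  simp [g]
end

section
/- Let π and π̄ be elements of a commutative ring with π + π̄ = a and π·π̄ = c. For k ≥ 0, let h_k(π, π̄) = Σ_{i=0}^{k} π^i π̄^{k-i} denote the complete homogeneous symmetric polynomial of degree k in two variables evaluated at (π, π̄). Define ε_k = 0 if k is odd and ε_k = (-c)^{k/2} if k is even. Then h_k(π, π̄) = ε_k + Σ_{j=0}^{⌈k/2⌉-1} (-1)^j * C(k - j, j) * a^{k-2j} * c^j. -/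
/-!
Both sides satisfy `u (k + 2) = a * u (k + 1) - c * u k` with `u 0 = 1` and `u 1 = a`: the
left side because `h_{k+1} = π h_k + π̄^{k+1}`, the binomial sum (indexed by the antidiagonal)
by Pascal's rule. On the right, the terms with `2 j > k` vanish and, for even `k`, the term
`j = k / 2` is `ε_k`.
-/

open Finset

section
variable {R : Type*} [CommRing R]

def lucasTerm (a c : R) (i j : ℕ) : R := (-1) ^ j * (i.choose j : R) * a ^ (i - j) * c ^ j

/-- The Lucas sequence `U_{k+1}(a, c)`, written as the coefficient of `t ^ k` in
`∑ i, (a t - c t²) ^ i = 1 / (1 - a t + c t²)`. -/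
def lucasSum (a c : R) (k : ℕ) : R := ∑ p ∈ antidiagonal k, lucasTerm a c p.1 p.2

theorem lucasTerm_succ_succ (a c : R) (i j : ℕ) :
    lucasTerm a c (i + 1) (j + 1) = a * lucasTerm a c i (j + 1) - c * lucasTerm a c i j := by
  have hpow : (i.choose (j + 1) : R) * a ^ (i - j) =
      a * ((i.choose (j + 1) : R) * a ^ (i - (j + 1))) := by
    rcases lt_or_ge i (j + 1) with hij | hij
    · simp [Nat.choose_eq_zero_of_lt hij]
    · rw [mul_left_comm, ← pow_succ', show i - (j + 1) + 1 = i - j by omega]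
  simp only [lucasTerm, Nat.choose_succ_succ', Nat.cast_add, Nat.add_sub_add_right]
  linear_combination (-1) ^ (j + 1) * c ^ (j + 1) * hpow

theorem lucasSum_add_two (a c : R) (k : ℕ) :
    lucasSum a c (k + 2) = a * lucasSum a c (k + 1) - c * lucasSum a c k := by
  have hleft : lucasTerm a c 0 (k + 2) = 0 := by simp [lucasTerm]
  have hright : lucasTerm a c (k + 2) 0 = a * lucasTerm a c (k + 1) 0 := by
    simp [lucasTerm, pow_succ']
  simp only [lucasSum, Nat.sum_antidiagonal_succ, Nat.sum_antidiagonal_succ' (n := k),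
    lucasTerm_succ_succ, hleft, hright, mul_add, mul_sum, sum_sub_distrib]
  ring

theorem sum_pow_mul_pow_succ (x y : R) (k : ℕ) :
    ∑ i ∈ range (k + 2), x ^ i * y ^ (k + 1 - i) =
      x * ∑ i ∈ range (k + 1), x ^ i * y ^ (k - i) + y ^ (k + 1) := by
  rw [sum_range_succ', mul_sum]
  simp only [Nat.add_sub_add_right, pow_succ', mul_assoc, pow_zero, one_mul, Nat.sub_zero]

theorem lucasSum_add_mul (x y : R) (k : ℕ) :
    lucasSum (x + y) (x * y) k = ∑ i ∈ range (k + 1), x ^ i * y ^ (k - i) := by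
  induction k using Nat.twoStepInduction with
  | zero => simp [lucasSum, lucasTerm]
  | one => simp [lucasSum, lucasTerm, sum_range_succ, Nat.antidiagonal_succ, add_comm]
  | more k ih₀ ih₁ =>
    rw [lucasSum_add_two, ih₀, ih₁, sum_pow_mul_pow_succ x y (k + 1), sum_pow_mul_pow_succ x y k]
    ring

theorem lucasSum_eq_sum_range (a c : R) (k : ℕ) :
    lucasSum a c k =
      ∑ j ∈ range (k + 1), (-1) ^ j * ((k - j).choose j : R) * a ^ (k - 2 * j) * c ^ j := by
  rw [lucasSum, ← Nat.sum_antidiagonal_swap, Nat.sum_antidiagonal_eq_sum_range_succ_mk]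
  refine sum_congr rfl fun j _ => ?_
  simp only [lucasTerm, Prod.swap_prod_mk, Nat.sub_sub, two_mul]

theorem sum_range_succ_eq_ite_add_sum_range_half {M : Type*} [AddCommMonoid M] (f : ℕ → M)
    (k : ℕ) (hf : ∀ j, k < 2 * j → f j = 0) :
    ∑ j ∈ range (k + 1), f j =
      (if Even k then f (k / 2) else 0) + ∑ j ∈ range ((k + 1) / 2), f j := by
  rw [← sum_subset (range_subset_range.2 (by omega : k / 2 + 1 ≤ k + 1))
    fun j _ hj => hf j (by rw [mem_range] at hj; omega)]
  rcases Nat.even_or_odd k with hk | hk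
  · rw [if_pos hk, sum_range_succ, add_comm, show (k + 1) / 2 = k / 2 by grind]
  · rw [if_neg (Nat.not_even_iff_odd.2 hk), zero_add, show (k + 1) / 2 = k / 2 + 1 by grind]

theorem lucasSum_eq_ite_add_sum (a c : R) (k : ℕ) :
    lucasSum a c k = (if Even k then (-c) ^ (k / 2) else 0) +
      ∑ j ∈ range ((k + 1) / 2), (-1) ^ j * ((k - j).choose j : R) * a ^ (k - 2 * j) * c ^ j := by
  rw [lucasSum_eq_sum_range, sum_range_succ_eq_ite_add_sum_range_half]
  · congr 1
    split_ifs with hk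
    · obtain ⟨t, rfl⟩ := hk
      rw [← two_mul, Nat.mul_div_cancel_left t two_pos, two_mul, Nat.add_sub_cancel, Nat.sub_self,
        neg_pow c, Nat.choose_self, Nat.cast_one, pow_zero, mul_one, mul_one]
    · rfl
  · intro j hj
    simp [Nat.choose_eq_zero_of_lt (by omega : k - j < j)]

end

/-- If `π + π̄ = a` and `π * π̄ = c` in a commutative ring, then the complete homogeneous
symmetric polynomial `h_k(π, π̄) = ∑_{i=0}^k π^i π̄^{k-i}` equals
`ε_k + ∑_{j=0}^{⌈k/2⌉-1} (-1)^j C(k-j, j) a^{k-2j} c^j`, where `ε_k = 0` for `k` odd and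
`ε_k = (-c)^{k/2}` for `k` even. -/
theorem stmt3 (R : Type*) [CommRing R] (π πb a c : R)
    (ha : π + πb = a) (hc : π * πb = c) (k : ℕ) :
    ∑ i ∈ Finset.range (k + 1), π ^ i * πb ^ (k - i) =
      (if Even k then (-c) ^ (k / 2) else 0) +
        ∑ j ∈ Finset.range ((k + 1) / 2),
          (-1 : R) ^ j * (Nat.choose (k - j) j : R) * a ^ (k - 2 * j) * c ^ j := by
  rw [← lucasSum_add_mul, ha, hc, lucasSum_eq_ite_add_sum]
end

section
/- Let p be a prime and m ≥ 1, and set k = p^m - 1. For all integers N with 1 ≤ N ≤ k and all j ≥ N, we have (-1)^j * C(k + N - j, j) ≡ (-1)^{j - N} * C(k - j, j - N) modulo p. -/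
/-! Since `p ∣ C(p^m, t)` for `0 < t < p^m`, Pascal's rule gives
`C(p^m - 1, t) ≡ (-1)^t (mod p)` for `t < p^m`. Propagating this along Pascal's rule once
more yields `C(p^m - 1 - s, t) ≡ (-1)^t C(s + t, t)` for `s, t < p^m`, which turns both sides
of the congruence into `C(2j - N, j)` when `j < p^m`; for larger `j` both binomials vanish. -/

theorem Nat.cast_choose_prime_pow_sub_one {R : Type*} [Ring R] {p : ℕ} [CharP R p]
    (hp : p.Prime) (m : ℕ) {t : ℕ} (ht : t ≤ p ^ m - 1) :
    ((p ^ m - 1).choose t : R) = (-1) ^ t := by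
  induction t with
  | zero => simp
  | succ t ih =>
    have hq : p ^ m - 1 + 1 = p ^ m := Nat.sub_add_cancel (Nat.one_le_pow _ _ hp.pos)
    have hvanish : ((p ^ m).choose (t + 1) : R) = 0 :=
      (CharP.cast_eq_zero_iff R p _).mpr (hp.dvd_choose_pow t.succ_ne_zero (by omega))
    rw [← hq, Nat.choose_succ_succ, Nat.cast_add, ih (by omega)] at hvanish
    rw [pow_succ, mul_neg_one, eq_neg_of_add_eq_zero_right hvanish]

theorem Nat.cast_choose_sub_eq_neg_one_pow_mul_choose {R : Type*} [CommRing R] {n : ℕ}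
    (h : ∀ t ≤ n, (n.choose t : R) = (-1) ^ t) {s t : ℕ} (hs : s ≤ n) (ht : t ≤ n) :
    ((n - s).choose t : R) = (-1) ^ t * ((s + t).choose t : R) := by
  induction s generalizing t with
  | zero => simpa using h t ht
  | succ s ihs =>
    induction t with
    | zero => simp
    | succ t iht =>
      have hpascal :
          (n - s).choose (t + 1) = (n - (s + 1)).choose t + (n - (s + 1)).choose (t + 1) := by
        rw [show n - s = n - (s + 1) + 1 by omega, Nat.choose_succ_succ]
      have hpascal' : (s + 1 + (t + 1)).choose (t + 1) =
          (s + 1 + t).choose t + (s + (t + 1)).choose (t + 1) := by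
        rw [show s + 1 + (t + 1) = s + (t + 1) + 1 by omega,
          show s + 1 + t = s + (t + 1) by omega, Nat.choose_succ_succ']
      have key := congrArg (Nat.cast (R := R)) hpascal
      rw [Nat.cast_add, ihs (by omega) ht, iht (by omega)] at key
      rw [hpascal', Nat.cast_add, eq_sub_of_add_eq' key.symm]
      ring

theorem stmt4_general (p m : ℕ) (hp : p.Prime) (N j : ℕ)
    (hN2 : N ≤ p ^ m - 1) (hj : N ≤ j) :
    ((-1 : ℤ) ^ j * (Nat.choose (p ^ m - 1 + N - j) j : ℤ)) ≡
      ((-1 : ℤ) ^ (j - N) * (Nat.choose (p ^ m - 1 - j) (j - N) : ℤ)) [ZMOD p] := by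
  rw [← ZMod.intCast_eq_intCast_iff]
  push_cast
  have hbase := fun t => Nat.cast_choose_prime_pow_sub_one (R := ZMod p) hp m (t := t)
  by_cases hjk : j ≤ p ^ m - 1
  · rw [show p ^ m - 1 + N - j = p ^ m - 1 - (j - N) by omega,
      Nat.cast_choose_sub_eq_neg_one_pow_mul_choose hbase (by omega) hjk,
      Nat.cast_choose_sub_eq_neg_one_pow_mul_choose hbase hjk (by omega),
      add_comm, Nat.choose_symm_add, ← mul_assoc, ← mul_assoc, ← mul_pow, ← mul_pow]
    simp
  · rw [Nat.choose_eq_zero_of_lt (n := p ^ m - 1 + N - j) (by omega),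
      Nat.choose_eq_zero_of_lt (n := p ^ m - 1 - j) (by omega)]
    simp

/-- Let `p` be prime, `m ≥ 1` and `k = p^m - 1`. For `1 ≤ N ≤ k` and `j ≥ N`,
`(-1)^j C(k + N - j, j) ≡ (-1)^{j-N} C(k - j, j - N) (mod p)`. -/
theorem stmt4 (p m : ℕ) (hp : p.Prime) (hm : 1 ≤ m) (N j : ℕ)
    (hN1 : 1 ≤ N) (hN2 : N ≤ p ^ m - 1) (hj : N ≤ j) :
    ((-1 : ℤ) ^ j * (Nat.choose (p ^ m - 1 + N - j) j : ℤ)) ≡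
      ((-1 : ℤ) ^ (j - N) * (Nat.choose (p ^ m - 1 - j) (j - N) : ℤ)) [ZMOD p] :=
  stmt4_general p m hp N j hN2 hj
end

section
/- For every m ≥ 1 and every integer j with 0 < j, the binomial coefficient C(2^m - 1 - j, j) is even. -/
/-!
If `n + j + 1 = 2 ^ m`, the binary digits of `n` and `j` are complementary, whereas by Lucas's
theorem `C(n, j)` is odd only when every binary digit of `j` is at most that of `n`; so for
`j > 0` it is even. The induction peels off the last binary digit.
-/

open Nat

theorem even_choose_of_add_add_one_eq_two_pow {m n j : ℕ} (hj : 0 < j)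
    (h : n + j + 1 = 2 ^ m) : Even (n.choose j) := by
  have : Fact (Nat.Prime 2) := ⟨Nat.prime_two⟩
  induction m generalizing n j with
  | zero => simp at h; omega
  | succ m ih =>
    rw [pow_succ] at h
    have lucas : n.choose j % 2 = ((n % 2).choose (j % 2) * (n / 2).choose (j / 2)) % 2 :=
      Choose.choose_modEq_choose_mod_mul_choose_div_nat
    rw [Nat.even_iff, lucas, ← Nat.even_iff]
    rcases Nat.even_or_odd j with hj_even | hj_odd
    · rw [Nat.even_iff] at hj_even
      exact (ih (by omega) (by omega)).mul_left _
    · rw [Nat.odd_iff] at hj_odd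
      rw [hj_odd, show n % 2 = 0 by omega, choose_zero_succ, zero_mul]
      exact Even.zero

theorem stmt6_general (m j : ℕ) (hj : 0 < j) :
    Even (Nat.choose (2 ^ m - 1 - j) j) := by
  rcases le_or_gt j (2 ^ m - 1) with hle | hgt
  · have : 1 ≤ 2 ^ m := Nat.one_le_two_pow
    exact even_choose_of_add_add_one_eq_two_pow hj (by omega : 2 ^ m - 1 - j + j + 1 = 2 ^ m)
  · rw [choose_eq_zero_of_lt (by omega)]
    exact Even.zero

/-- For every `m ≥ 1` and `j > 0`, the binomial coefficient `C(2^m - 1 - j, j)` is even. -/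
theorem stmt6 (m j : ℕ) (hm : 1 ≤ m) (hj : 0 < j) :
    Even (Nat.choose (2 ^ m - 1 - j) j) :=
  stmt6_general m j hj
end

section
/- Let q be an odd prime power and F a finite field with q elements. For each α, β ∈ F define L(α, β) = (α² - 4β)^{(q-1)/2} ∈ F (the Legendre symbol of the discriminant of X² - αX + β). Then for every integer m with 1 ≤ m ≤ q - 1, the sum over all α, β ∈ F^× of L(α, β) · (α^{-2} β)^m equals (-1)^{(q-1)/2} · 4^{-m} · C(m, (q-1)/2) as elements of F. -/
/-!
For `α ≠ 0` the substitution `β = α² (1 - x) / 4`, together with `(α²)^((q-1)/2) = α^(q-1) = 1`,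
turns the inner sum into `4⁻ᵐ ∑ₓ xᵏ (1 - x)ᵐ` with `k = (q-1)/2`, independently of `α`; the
`q - 1 = -1` values of `α` then contribute a factor `-1`. Expanding `(1 - x)ᵐ` binomially leaves
power sums `∑ₓ xⁿ` with `0 < n < 2(q - 1)`, which vanish except for `n = q - 1`, where the sum is
`-1`; so only the coefficient `C(m, q - 1 - k) = C(m, k)` survives.
-/

open Finset

namespace FiniteField

variable {K : Type*} [Field K] [Fintype K]

theorem sum_pow_eq_sum_units_pow [DecidableEq K] {n : ℕ} (hn : n ≠ 0) :
    ∑ x : K, x ^ n = ∑ x : Kˣ, (x ^ n : K) := by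
  rw [← sum_filter_of_ne (p := (· ≠ 0)) fun x _ hx ↦ by rintro rfl; simp [hn] at hx,
    sum_subtype _ (fun _ ↦ mem_filter_univ _)]
  exact (Fintype.sum_equiv unitsEquivNeZero _ _ fun _ ↦ rfl).symm

theorem sum_pow_of_pos_of_lt {n : ℕ} (hn : 0 < n)
    (hn' : n < 2 * (Fintype.card K - 1)) :
    ∑ x : K, x ^ n = if n = Fintype.card K - 1 then -1 else 0 := by
  classical
  rw [sum_pow_eq_sum_units_pow hn.ne', sum_pow_units]
  congr 1
  refine propext ⟨fun ⟨c, hc⟩ ↦ ?_, fun h ↦ h ▸ dvd_rfl⟩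
  rcases c with _ | _ | c <;> [omega; omega; nlinarith]

theorem sum_pow_mul_one_sub_pow {j k m : ℕ} (hk : 0 < k) (hjk : k + j = Fintype.card K - 1)
    (hkm : k + m < 2 * (Fintype.card K - 1)) :
    ∑ x : K, x ^ k * (1 - x) ^ m = -(-1) ^ j * (m.choose j : K) := by
  classical
  have hexp (x : K) : x ^ k * (1 - x) ^ m =
      ∑ i ∈ range (m + 1), (-1) ^ i * (m.choose i : K) * x ^ (k + i) := by
    rw [sub_eq_neg_add, add_pow, mul_sum]
    refine sum_congr rfl fun i _ ↦ ?_
    rw [neg_pow, one_pow, pow_add]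
    ring
  simp_rw [hexp]
  rw [sum_comm]
  simp_rw [← mul_sum]
  have hterm : ∀ i ∈ range (m + 1), (-1) ^ i * (m.choose i : K) * ∑ x : K, x ^ (k + i) =
      if j = i then -((-1) ^ i * (m.choose i : K)) else 0 := fun i hi ↦ by
    rw [sum_pow_of_pos_of_lt (by omega) (by simp at hi; omega)]
    simp only [show k + i = Fintype.card K - 1 ↔ j = i by omega]
    split_ifs <;> ring
  rw [sum_congr rfl hterm, sum_ite_eq]
  split_ifs with hj
  · ring
  · rw [Nat.choose_eq_zero_of_lt (by simpa using hj)]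
    simp

theorem cast_card_filter_ne_zero [DecidablePred fun x : K ↦ x ≠ 0] :
    (#(univ.filter fun x : K ↦ x ≠ 0) : K) = -1 := by
  classical
  rw [show univ.filter (fun x : K ↦ x ≠ 0) = univ.erase 0 by ext; simp,
    card_erase_of_mem (mem_univ 0), card_univ, Nat.cast_sub Fintype.card_pos, cast_card_eq_zero,
    Nat.cast_one, zero_sub]

end FiniteField

theorem sum_sub_four_mul_pow_mul_inv_mul_pow {F : Type*} [Field F] [Fintype F] {a : F}
    (ha : a ≠ 0) (h4 : (4 : F) ≠ 0) {k : ℕ} (hak : a ^ k = 1) (m : ℕ) :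
    ∑ b : F, (a - 4 * b) ^ k * (a⁻¹ * b) ^ m = ((4 : F) ^ m)⁻¹ * ∑ x : F, x ^ k * (1 - x) ^ m := by
  rw [← ((Equiv.subLeft 1).trans (Equiv.mulLeft₀ (a / 4) (div_ne_zero ha h4))).sum_comp, mul_sum]
  refine sum_congr rfl fun x _ ↦ ?_
  simp only [Equiv.trans_apply, Equiv.subLeft_apply, Equiv.mulLeft₀_apply]
  rw [show a - 4 * (a / 4 * (1 - x)) = a * x by field_simp; ring,
    show a⁻¹ * (a / 4 * (1 - x)) = (1 - x) / 4 by field_simp, mul_pow, hak, div_pow]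
  ring

open scoped Classical in
/-- Let `F` be a finite field of odd cardinality `q`, and for `α, β ∈ F` let
`L(α, β) = (α² - 4β)^{(q-1)/2}`. Then for `1 ≤ m ≤ q - 1`,
`∑_{α, β ∈ Fˣ} L(α, β) (α⁻² β)^m = (-1)^{(q-1)/2} · 4^{-m} · C(m, (q-1)/2)` in `F`. -/
theorem stmt9 (F : Type*) [Field F] [Fintype F] (q : ℕ) (hq : Fintype.card F = q)
    (hodd : Odd q) (m : ℕ) (hm1 : 1 ≤ m) (hm2 : m ≤ q - 1) :
    ∑ α ∈ Finset.univ.filter (fun α : F => α ≠ 0),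
      ∑ β ∈ Finset.univ.filter (fun β : F => β ≠ 0),
        (α ^ 2 - 4 * β) ^ ((q - 1) / 2) * ((α ^ 2)⁻¹ * β) ^ m
      = (-1 : F) ^ ((q - 1) / 2) * ((4 : F) ^ m)⁻¹ * (Nat.choose m ((q - 1) / 2) : F) := by
  set k := (q - 1) / 2
  have hq1 : 1 < q := hq ▸ Fintype.one_lt_card
  have hqk : q - 1 = 2 * k := by obtain ⟨r, rfl⟩ := hodd; omega
  have h4 : (4 : F) ≠ 0 := by
    have h2 : ringChar F ≠ 2 := fun h ↦ by
      have := FiniteField.even_card_iff_char_two.mp h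
      obtain ⟨r, rfl⟩ := hodd; omega
    simpa [show (4 : F) = 2 ^ 2 by norm_num] using Ring.two_ne_zero h2
  have hinner : ∀ α ∈ univ.filter (fun α : F => α ≠ 0),
      ∑ β ∈ univ.filter (fun β : F => β ≠ 0), (α ^ 2 - 4 * β) ^ k * ((α ^ 2)⁻¹ * β) ^ m
        = ((4 : F) ^ m)⁻¹ * ∑ x : F, x ^ k * (1 - x) ^ m := fun α hα ↦ by
    have hα : α ≠ 0 := (mem_filter.mp hα).2
    rw [sum_filter_of_ne fun β _ hβ ↦ by rintro rfl; simp [Nat.one_le_iff_ne_zero.mp hm1] at hβ]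
    refine sum_sub_four_mul_pow_mul_inv_mul_pow (pow_ne_zero 2 hα) h4 ?_ m
    rw [← pow_mul, ← hqk, ← hq, FiniteField.pow_card_sub_one_eq_one α hα]
  rw [sum_congr rfl hinner, sum_const, nsmul_eq_mul, FiniteField.cast_card_filter_ne_zero,
    FiniteField.sum_pow_mul_one_sub_pow (j := k) (by omega) (by omega) (by omega)]
  ring
end

section
/- In the power series ring F₂[T][[X]], the identity Σ_{k ≥ 0} c_k X^k = X / ((1 - X - T·X²)(1 - T·X²)) holds, where c_k = Σ_{0 ≤ j < k/2} C(k - j, j) · T^j (binomial coefficients reduced mod 2), i.e., c_k is the sum over j with 2j < k of C(k-j, j) T^j in F₂[T]. -/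
/-!
Over any commutative ring and for any `t`, the full sums `a_k = ∑_{i + j = k} C(i, j) t^j`
satisfy `a_{k+2} = a_{k+1} + t a_k` by Pascal's rule, so `∑ a_k X^k = 1 / (1 - X - t X²)`.
Among the terms with `2j ≥ k` only the diagonal one `j = k/2` (for even `k`) survives,
contributing `t^(k/2)`, whose generating function is `1 / (1 - t X²)`. Hence
`∑ c_k X^k = 1 / (1 - X - t X²) - 1 / (1 - t X²) = X / ((1 - X - t X²)(1 - t X²))`.
-/

open Finset PowerSeries

section

variable {R : Type*} [CommRing R]

theorem PowerSeries.mk_mul_eq_of_add_two {p q : R} {f : ℕ → R}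
    (hf : ∀ n, f (n + 2) = p * f (n + 1) + q * f n) :
    mk f * (1 - C p * X - C q * X ^ 2) = C (f 0) + C (f 1 - p * f 0) * X := by
  rw [show mk f * (1 - C p * X - C q * X ^ 2) = mk f - C p * (mk f * X) - C q * (mk f * X ^ 2)
    by ring]
  ext (_ | _ | n)
  · simp
  · simp [coeff_mul_X_pow']
  · simp [coeff_mul_X_pow', hf]

/-- The Fibonacci polynomial evaluated at `t`: `fibPoly 1 k = Nat.fib (k + 1)`. -/
def fibPoly (t : R) (k : ℕ) : R := ∑ p ∈ antidiagonal k, (p.1.choose p.2 : R) * t ^ p.2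

theorem fibPoly_add_two (t : R) (n : ℕ) :
    fibPoly t (n + 2) = fibPoly t (n + 1) + t * fibPoly t n := by
  have pascal : ∀ p : ℕ × ℕ, ((p.1 + 1).choose (p.2 + 1) : R) * t ^ (p.2 + 1) =
      (p.1.choose (p.2 + 1) : R) * t ^ (p.2 + 1) + t * ((p.1.choose p.2 : R) * t ^ p.2) := by
    intro p
    rw [Nat.choose_succ_succ', Nat.cast_add]
    ring
  rw [fibPoly, fibPoly, fibPoly, Nat.sum_antidiagonal_succ', Nat.sum_antidiagonal_succ,
    Nat.sum_antidiagonal_succ']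
  simp only [pascal, sum_add_distrib, mul_sum, Nat.choose_zero_succ, Nat.choose_zero_right]
  push_cast
  ring

theorem mk_fibPoly_mul (t : R) : mk (fibPoly t) * (1 - X - C t * X ^ 2) = 1 := by
  have := mk_mul_eq_of_add_two (p := 1) (q := t) fun n => (fibPoly_add_two t n).trans (by ring)
  simpa [fibPoly, Nat.antidiagonal_succ] using this

def evenPow (t : R) (k : ℕ) : R := if Even k then t ^ (k / 2) else 0

theorem evenPow_add_two (t : R) (n : ℕ) : evenPow t (n + 2) = t * evenPow t n := by
  simp only [evenPow, Nat.even_add, even_two, iff_true, Nat.add_div_right n two_pos]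
  split_ifs <;> ring

theorem mk_evenPow_mul (t : R) : mk (evenPow t) * (1 - C t * X ^ 2) = 1 := by
  have := mk_mul_eq_of_add_two (p := 0) (q := t) fun n => (evenPow_add_two t n).trans (by ring)
  simpa [evenPow] using this

theorem fibPoly_eq_sum_range (t : R) (k : ℕ) :
    fibPoly t k = ∑ j ∈ range (k + 1), ((k - j).choose j : R) * t ^ j := by
  rw [fibPoly, ← Nat.sum_antidiagonal_swap]
  exact Nat.sum_antidiagonal_eq_sum_range_succ (fun i j => (j.choose i : R) * t ^ i) k

theorem sum_filter_not_lt_choose_mul_pow (t : R) (k : ℕ) :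
    ∑ j ∈ (range (k + 1)).filter (¬ 2 * · < k), ((k - j).choose j : R) * t ^ j =
      evenPow t k := by
  have vanish : ∀ j, k < 2 * j → ((k - j).choose j : R) * t ^ j = 0 := fun j hj => by
    rw [Nat.choose_eq_zero_of_lt (by omega), Nat.cast_zero, zero_mul]
  obtain ⟨m, rfl | rfl⟩ := Nat.even_or_odd' k
  · rw [evenPow, if_pos (even_two_mul m), Nat.mul_div_cancel_left m two_pos,
      sum_eq_single_of_mem m (by simp only [mem_filter, mem_range]; omega)
        fun j hj _ => vanish j (by simp only [mem_filter, mem_range] at hj; omega)]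
    simp [two_mul]
  · rw [evenPow, if_neg (Nat.not_even_iff_odd.mpr (odd_two_mul_add_one m))]
    exact sum_eq_zero fun j hj => vanish j (by simp only [mem_filter, mem_range] at hj; omega)

theorem sum_filter_add_evenPow (t : R) (k : ℕ) :
    ∑ j ∈ (range k).filter (2 * · < k), ((k - j).choose j : R) * t ^ j + evenPow t k =
      fibPoly t k := by
  rw [fibPoly_eq_sum_range, ← sum_filter_add_sum_filter_not (range (k + 1)) (2 * · < k),
    sum_filter_not_lt_choose_mul_pow]
  congr 2
  ext j
  simp only [mem_filter, mem_range]
  omega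

theorem mk_fibPoly_sub_mk_evenPow_mul (t : R) :
    (mk (fibPoly t) - mk (evenPow t)) * ((1 - X - C t * X ^ 2) * (1 - C t * X ^ 2)) = X := by
  linear_combination (1 - C t * X ^ 2) * mk_fibPoly_mul t - (1 - X - C t * X ^ 2) * mk_evenPow_mul t

end

/-- In `F₂[T][[X]]`, we have `∑_{k ≥ 0} c_k X^k = X / ((1 - X - T X²)(1 - T X²))`, where
`c_k = ∑_{0 ≤ j, 2j < k} C(k - j, j) T^j ∈ F₂[T]`. Stated multiplied through by the
(invertible, constant term `1`) denominator. -/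
theorem stmt11 :
    (PowerSeries.mk (fun k => ∑ j ∈ (Finset.range k).filter (fun j => 2 * j < k),
        Polynomial.C ((Nat.choose (k - j) j : ZMod 2)) * Polynomial.X ^ j) :
      PowerSeries (Polynomial (ZMod 2))) *
      ((1 - PowerSeries.X - PowerSeries.C (R := Polynomial (ZMod 2)) Polynomial.X *
          PowerSeries.X ^ 2) *
        (1 - PowerSeries.C (R := Polynomial (ZMod 2)) Polynomial.X * PowerSeries.X ^ 2))
      = PowerSeries.X := by
  convert mk_fibPoly_sub_mk_evenPow_mul (Polynomial.X : Polynomial (ZMod 2)) using 2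
  ext k
  simp [← sum_filter_add_evenPow, map_natCast]
end

section
/- Define the Stern-Brocot sequence (a_k)_{k ≥ 0} by a₀ = a₁ = 1, a_{2n} = a_n + a_{n-1} for n ≥ 1, and a_{2n+1} = a_n for n ≥ 1. Then for every k ≥ 0, a_k equals the number of integers j with 0 ≤ 2j ≤ k such that the binomial coefficient C(k - j, j) is odd. -/
/-!
Lucas's theorem modulo 2 gives `C(2a + r, 2b + s) ≡ C(r, s) C(a, b)` for `r, s ∈ {0, 1}`.
Split the indices `j` of the odd entries `C(k - j, j)` of the `k`-th shallow diagonal of Pascal's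
triangle by parity. For `k = 2n` the even indices `2i` correspond to the odd entries of diagonal
`n` and the odd indices `2i + 1` to those of diagonal `n - 1`; for `k = 2n + 1` the even indices
correspond to diagonal `n`, while odd indices give `C(2m, 2i + 1)`, which is even. So the counts
satisfy the Stern-Brocot recursion.
-/

open Finset

/-- The Stern-Brocot sequence: `a₀ = a₁ = 1`, `a_{2n} = a_n + a_{n-1}` and `a_{2n+1} = a_n`
for `n ≥ 1`. -/
def stern : ℕ → ℕ
  | 0 => 1
  | 1 => 1
  | n + 2 =>
    if (n + 2) % 2 = 0 then stern ((n + 2) / 2) + stern ((n + 2) / 2 - 1)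
    else stern ((n + 2) / 2)
decreasing_by all_goals omega

theorem Nat.choose_two_mul_add_mod_two (a b r s : ℕ) (hr : r < 2) (hs : s < 2) :
    (2 * a + r).choose (2 * b + s) % 2 = r.choose s * a.choose b % 2 := by
  have h := Choose.choose_modEq_choose_mod_mul_choose_div_nat (n := 2 * a + r) (k := 2 * b + s)
    (p := 2)
  rwa [show (2 * a + r) % 2 = r by omega, show (2 * b + s) % 2 = s by omega,
    show (2 * a + r) / 2 = a by omega, show (2 * b + s) / 2 = b by omega] at h

theorem Nat.choose_two_mul_two_mul_mod_two (a b : ℕ) :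
    (2 * a).choose (2 * b) % 2 = a.choose b % 2 := by
  simpa using choose_two_mul_add_mod_two a b 0 0 two_pos two_pos

theorem Nat.choose_two_mul_add_one_two_mul_mod_two (a b : ℕ) :
    (2 * a + 1).choose (2 * b) % 2 = a.choose b % 2 := by
  simpa using choose_two_mul_add_mod_two a b 1 0 one_lt_two two_pos

theorem Nat.choose_two_mul_add_one_two_mul_add_one_mod_two (a b : ℕ) :
    (2 * a + 1).choose (2 * b + 1) % 2 = a.choose b % 2 := by
  simpa using choose_two_mul_add_mod_two a b 1 1 one_lt_two one_lt_two

theorem Nat.choose_two_mul_two_mul_add_one_mod_two (a b : ℕ) :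
    (2 * a).choose (2 * b + 1) % 2 = 0 := by
  simpa using choose_two_mul_add_mod_two a b 0 1 two_pos one_lt_two

theorem Finset.card_eq_add_of_mem_two_mul_iff {s t u : Finset ℕ} (ht : ∀ i, 2 * i ∈ s ↔ i ∈ t)
    (hu : ∀ i, 2 * i + 1 ∈ s ↔ i ∈ u) : #s = #t + #u := by
  have hs : s = t.image (2 * ·) ∪ u.image (2 * · + 1) := by
    ext j
    obtain ⟨i, rfl | rfl⟩ := Nat.even_or_odd' j <;> grind
  rw [hs, card_union_of_disjoint, card_image_of_injective _ (fun a b h => by grind),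
    card_image_of_injective _ (fun a b h => by grind)]
  grind [disjoint_left]

def oddShallowDiagonal (k : ℕ) : Finset ℕ :=
  (range (k + 1)).filter (fun j => 2 * j ≤ k ∧ (k - j).choose j % 2 = 1)

theorem mem_oddShallowDiagonal {k j : ℕ} :
    j ∈ oddShallowDiagonal k ↔ 2 * j ≤ k ∧ (k - j).choose j % 2 = 1 := by
  simp only [oddShallowDiagonal, mem_filter, mem_range, and_iff_right_iff_imp]
  omega

theorem two_mul_mem_oddShallowDiagonal_two_mul {n i : ℕ} :
    2 * i ∈ oddShallowDiagonal (2 * n) ↔ i ∈ oddShallowDiagonal n := by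
  simp only [mem_oddShallowDiagonal]
  by_cases h : i ≤ n
  · rw [show 2 * n - 2 * i = 2 * (n - i) by omega, Nat.choose_two_mul_two_mul_mod_two]
    omega
  · omega

theorem two_mul_add_one_mem_oddShallowDiagonal_two_mul {n i : ℕ} (hn : n ≠ 0) :
    2 * i + 1 ∈ oddShallowDiagonal (2 * n) ↔ i ∈ oddShallowDiagonal (n - 1) := by
  simp only [mem_oddShallowDiagonal]
  by_cases h : i < n
  · rw [show 2 * n - (2 * i + 1) = 2 * (n - 1 - i) + 1 by omega,
      Nat.choose_two_mul_add_one_two_mul_add_one_mod_two]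
    omega
  · omega

theorem two_mul_mem_oddShallowDiagonal_two_mul_add_one {n i : ℕ} :
    2 * i ∈ oddShallowDiagonal (2 * n + 1) ↔ i ∈ oddShallowDiagonal n := by
  simp only [mem_oddShallowDiagonal]
  by_cases h : i ≤ n
  · rw [show 2 * n + 1 - 2 * i = 2 * (n - i) + 1 by omega,
      Nat.choose_two_mul_add_one_two_mul_mod_two]
    omega
  · omega

theorem two_mul_add_one_notMem_oddShallowDiagonal_two_mul_add_one {n i : ℕ} :
    2 * i + 1 ∉ oddShallowDiagonal (2 * n + 1) := by
  rw [mem_oddShallowDiagonal, show 2 * n + 1 - (2 * i + 1) = 2 * (n - i) by omega,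
    Nat.choose_two_mul_two_mul_add_one_mod_two]
  omega

theorem card_oddShallowDiagonal_two_mul {n : ℕ} (hn : n ≠ 0) :
    #(oddShallowDiagonal (2 * n)) = #(oddShallowDiagonal n) + #(oddShallowDiagonal (n - 1)) :=
  card_eq_add_of_mem_two_mul_iff (fun _ => two_mul_mem_oddShallowDiagonal_two_mul)
    (fun _ => two_mul_add_one_mem_oddShallowDiagonal_two_mul hn)

theorem card_oddShallowDiagonal_two_mul_add_one (n : ℕ) :
    #(oddShallowDiagonal (2 * n + 1)) = #(oddShallowDiagonal n) := by
  simpa using card_eq_add_of_mem_two_mul_iff (u := ∅)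
    (fun _ => two_mul_mem_oddShallowDiagonal_two_mul_add_one)
    (fun _ => iff_of_false two_mul_add_one_notMem_oddShallowDiagonal_two_mul_add_one
      (notMem_empty _))

theorem stern_two_mul {n : ℕ} (hn : n ≠ 0) : stern (2 * n) = stern n + stern (n - 1) := by
  obtain ⟨m, rfl⟩ := Nat.exists_eq_succ_of_ne_zero hn
  rw [show 2 * (m + 1) = 2 * m + 2 by ring, stern, if_pos (by omega),
    show (2 * m + 2) / 2 = m + 1 by omega]

theorem stern_two_mul_add_one (n : ℕ) : stern (2 * n + 1) = stern n := by
  rcases n with _ | m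
  · rw [stern, stern]
  · rw [show 2 * (m + 1) + 1 = 2 * m + 1 + 2 by ring, stern, if_neg (by omega),
      show (2 * m + 1 + 2) / 2 = m + 1 by omega]

/-- For every `k ≥ 0`, the Stern-Brocot number `a_k` equals the number of integers `j` with
`0 ≤ 2j ≤ k` such that `C(k - j, j)` is odd. -/
theorem stmt13 (k : ℕ) :
    stern k =
      ((Finset.range (k + 1)).filter
        (fun j => 2 * j ≤ k ∧ Nat.choose (k - j) j % 2 = 1)).card := by
  change stern k = #(oddShallowDiagonal k)
  refine Nat.strong_induction_on k fun k ih => ?_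
  obtain ⟨n, rfl | rfl⟩ := Nat.even_or_odd' k
  · rcases eq_or_ne n 0 with rfl | hn
    · rw [Nat.mul_zero, stern]; rfl
    · rw [stern_two_mul hn, card_oddShallowDiagonal_two_mul hn, ih n (by omega),
        ih (n - 1) (by omega)]
  · rw [stern_two_mul_add_one, card_oddShallowDiagonal_two_mul_add_one, ih n (by omega)]
end

section
/- Let (a_k)_{k ≥ 0} be the Stern-Brocot sequence defined by a₀ = a₁ = 1, a_{2n} = a_n + a_{n-1}, a_{2n+1} = a_n for n ≥ 1. Then for every N ≥ 0, the maximum of a_k over 0 ≤ k ≤ 2^N - 1 equals the Fibonacci number F_{N+1}. -/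
open Finset

lemma stern_even (m : ℕ) (hm : 1 ≤ m) : stern (2*m) = stern m + stern (m-1) := by
  obtain ⟨n, rfl⟩ := Nat.exists_eq_add_of_le hm
  rw [show 2*(1+n) = (2*n) + 2 by ring, stern, if_pos (by omega)]
  congr 1 <;> congr 1 <;> omega

lemma stern_odd (m : ℕ) : stern (2*m+1) = stern m := by
  match m with
  | 0 => simp [stern]
  | n+1 =>
    rw [show 2*(n+1)+1 = (2*n+1) + 2 by ring, stern, if_neg (by omega)]
    congr 1; omega

lemma fib_sum (n : ℕ) : Nat.fib (n+1) + Nat.fib n = Nat.fib (n+2) := by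
  rw [Nat.add_comm]; exact (Nat.fib_add_two).symm

lemma stern_bounds (N : ℕ) :
    (∀ k, k < 2^N → stern k ≤ Nat.fib (N+1)) ∧
    (∀ k, k+1 < 2^N → stern k + stern (k+1) ≤ Nat.fib (N+2)) := by
  induction N with
  | zero =>
    refine ⟨fun k hk => ?_, fun k hk => by omega⟩
    interval_cases k <;> simp [stern]
  | succ N ih =>
    obtain ⟨P, Q⟩ := ih
    have hpow : 2^(N+1) = 2*2^N := by ring
    have hfib : Nat.fib (N+1) ≤ Nat.fib (N+2) := Nat.fib_le_fib_succ
    constructor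
    · intro k hk
      show stern k ≤ Nat.fib (N+2)
      rcases Nat.even_or_odd k with ⟨m, hm⟩ | ⟨m, hm⟩
      · rcases Nat.eq_zero_or_pos m with rfl | hm1
        · subst hm; show stern 0 ≤ Nat.fib (N+2); simp [stern]; exact Nat.fib_pos.2 (by omega)
        · have e : stern k = stern m + stern (m-1) := by
            rw [hm, show m+m = 2*m by ring, stern_even m hm1]
          rw [e]
          have h1 := Q (m-1) (by omega)
          rw [show m-1+1 = m by omega] at h1
          omega
      · have e : stern k = stern m := by rw [hm, stern_odd]
        rw [e]
        exact le_trans (P m (by omega)) hfib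
    · intro k hk
      show stern k + stern (k+1) ≤ Nat.fib (N+3)
      rcases Nat.even_or_odd k with ⟨m, hm⟩ | ⟨m, hm⟩
      · rcases Nat.eq_zero_or_pos m with rfl | hm1
        · have h0 : stern 0 + stern 1 = 2 := by simp [stern]
          subst hm
          simp only [Nat.zero_add] at *
          rw [h0]
          calc 2 ≤ Nat.fib 3 := by decide
            _ ≤ Nat.fib (N+3) := Nat.fib_mono (by omega)
        · have e1 : stern k = stern m + stern (m-1) := by
            rw [hm, show m+m = 2*m by ring, stern_even m hm1]
          have e2 : stern (k+1) = stern m := by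
            rw [hm, show m+m+1 = 2*m+1 by ring, stern_odd]
          rw [e1, e2]
          have h1 := Q (m-1) (by omega)
          rw [show m-1+1 = m by omega] at h1
          have h2 := P m (by omega)
          have h3 : Nat.fib (N+2) + Nat.fib (N+1) = Nat.fib (N+3) := fib_sum (N+1)
          omega
      · have e1 : stern k = stern m := by rw [hm, stern_odd]
        have e2 : stern (k+1) = stern (m+1) + stern m := by
          rw [hm, show 2*m+1+1 = 2*(m+1) by ring, stern_even (m+1) (by omega)]
          simp
        rw [e1, e2]
        have h1 := Q m (by omega)
        have h2 := P m (by omega)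
        have h3 : Nat.fib (N+2) + Nat.fib (N+1) = Nat.fib (N+3) := fib_sum (N+1)
        omega

lemma stern_witness (N : ℕ) (hN : 1 ≤ N) :
    ∃ k, k + 1 < 2^N ∧
      ((stern k = Nat.fib N ∧ stern (k+1) = Nat.fib (N+1)) ∨
       (stern k = Nat.fib (N+1) ∧ stern (k+1) = Nat.fib N)) := by
  induction N with
  | zero => omega
  | succ N ih =>
    rcases Nat.eq_zero_or_pos N with rfl | hN1
    · exact ⟨0, by norm_num, Or.inl ⟨by simp [stern], by simp [stern]⟩⟩
    · obtain ⟨k, hk, h⟩ := ih hN1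
      have hpow : 2^(N+1) = 2*2^N := by ring
      rcases h with ⟨h1, h2⟩ | ⟨h1, h2⟩
      · refine ⟨2*k+2, by omega, Or.inr ⟨?_, ?_⟩⟩
        · rw [show 2*k+2 = 2*(k+1) by ring, stern_even (k+1) (by omega)]
          simp only [Nat.add_sub_cancel]
          rw [h1, h2]
          exact fib_sum N
        · rw [show 2*k+2+1 = 2*(k+1)+1 by ring, stern_odd, h2]
      · refine ⟨2*k+1, by omega, Or.inl ⟨?_, ?_⟩⟩
        · rw [stern_odd, h1]
        · rw [show 2*k+1+1 = 2*(k+1) by ring, stern_even (k+1) (by omega)]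
          simp only [Nat.add_sub_cancel]
          rw [h1, h2]
          exact Nat.fib_add_two.symm

/-- For every `N ≥ 0`, the maximum of the Stern-Brocot numbers `a_k` over `0 ≤ k ≤ 2^N - 1`
equals the Fibonacci number `F_{N+1}`. -/
theorem stmt14 (N : ℕ) :
    (Finset.range (2 ^ N)).sup stern = Nat.fib (N + 1) := by
  apply le_antisymm
  · exact Finset.sup_le fun k hk => (stern_bounds N).1 k (Finset.mem_range.1 hk)
  · rcases Nat.eq_zero_or_pos N with rfl | hN
    · simpa [stern] using Finset.le_sup (f := stern) (Finset.mem_range.2 (show (0:ℕ) < 2^0 by norm_num))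
    · obtain ⟨k, hk, h⟩ := stern_witness N hN
      rcases h with ⟨h1, h2⟩ | ⟨h1, h2⟩
      · calc Nat.fib (N+1) = stern (k+1) := h2.symm
          _ ≤ _ := Finset.le_sup (Finset.mem_range.2 (by omega))
      · calc Nat.fib (N+1) = stern k := h1.symm
          _ ≤ _ := Finset.le_sup (Finset.mem_range.2 (by omega))
end

section
/- Let q = 2^r, let s and m be integers with 1 ≤ s ≤ r and m ≥ 0, let k + 2 = 2^s·q^m + 1, and let l = 2^{r-1}(k+2) mod (q-1). Then the sum Σ_{j ≡ l-1 mod (q-1), 0 ≤ j < k/2} C(k - j, j) mod 2 equals 1 if l ≡ 1 mod (q-1) and 0 otherwise. -/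
open Finset

lemma aux_even : ∀ N k j : ℕ, k + 1 = 2 ^ N → 0 < j → 2 * j < k → 2 ∣ Nat.choose (k - j) j := by
  intro N
  induction N with
  | zero => intro k j hk hj h2; omega
  | succ N ih =>
    intro k j hk hj h2
    haveI : Fact (Nat.Prime 2) := ⟨Nat.prime_two⟩
    have H := @Choose.choose_modEq_choose_mod_mul_choose_div_nat (k - j) j 2 _
    rw [← Nat.modEq_zero_iff_dvd]
    have hpow : (2:ℕ) ^ (N + 1) = 2 * 2 ^ N := by ring
    rcases Nat.even_or_odd j with ⟨j', rfl⟩ | ho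
    · have hj' : 0 < j' := by omega
      have hkm : (k - (j' + j')) % 2 = 1 := by omega
      have hkd : (k - (j' + j')) / 2 = 2 ^ N - 1 - j' := by omega
      have hjm : (j' + j') % 2 = 0 := by omega
      have hjd : (j' + j') / 2 = j' := by omega
      rw [hkm, hkd, hjm, hjd] at H
      have e1 : 2 ^ N - 1 + 1 = 2 ^ N := by omega
      have e2 : 2 * j' < 2 ^ N - 1 := by
        rcases N with _ | n
        · omega
        · have h4 : (2:ℕ) ^ (n + 1) = 2 * 2 ^ n := by ring
          omega
      have hrec := ih (2 ^ N - 1) j' e1 hj' e2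
      refine H.trans ?_
      simpa using (Nat.modEq_zero_iff_dvd).mpr hrec
    · rw [Nat.odd_iff] at ho
      have hkm : (k - j) % 2 = 0 := by omega
      have hjm : j % 2 = 1 := by omega
      rw [hkm, hjm] at H
      simpa using H

/-- Let `q = 2^r`, `1 ≤ s ≤ r`, `m ≥ 0`, `k + 2 = 2^s q^m + 1` and `l = 2^{r-1}(k+2)`. Then
`∑_{0 ≤ j < k/2, j ≡ l-1 (mod q-1)} C(k - j, j)` reduced mod `2` equals `1` if
`l ≡ 1 (mod q-1)` and `0` otherwise. -/
theorem stmt15 (r s m : ℕ) (hs1 : 1 ≤ s) (hs2 : s ≤ r)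
    (q k l : ℕ) (hq : q = 2 ^ r) (hk : k + 2 = 2 ^ s * q ^ m + 1)
    (hl : l = 2 ^ (r - 1) * (k + 2)) :
    (∑ j ∈ (Finset.range k).filter
        (fun j => 2 * j < k ∧ j % (q - 1) = (l - 1) % (q - 1)),
        (Nat.choose (k - j) j : ZMod 2))
      = if l % (q - 1) = 1 % (q - 1) then 1 else 0 := by
  subst hq
  have hr1 : 1 ≤ r := le_trans hs1 hs2
  have hk1 : k + 1 = 2 ^ (s + r * m) := by
    have h1 : (2:ℕ) ^ s * (2 ^ r) ^ m = 2 ^ (s + r * m) := by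
      rw [← pow_mul, ← pow_add]
    omega
  have hkpos : 1 ≤ k := by
    have : (2:ℕ) ^ 1 ≤ 2 ^ (s + r * m) := Nat.pow_le_pow_right (by norm_num) (by omega)
    omega
  have hqpos : 1 ≤ 2 ^ r - 1 := by
    have : (2:ℕ) ^ 1 ≤ 2 ^ r := Nat.pow_le_pow_right (by norm_num) hr1
    omega
  have hlpos : 1 ≤ l := by
    rw [hl]
    have : (1:ℕ) ≤ 2 ^ (r-1) := Nat.one_le_two_pow
    nlinarith
  have hcond : (l - 1) % (2 ^ r - 1) = 0 ↔ l % (2 ^ r - 1) = 1 % (2 ^ r - 1) := by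
    rw [← Nat.dvd_iff_mod_eq_zero]
    constructor
    · intro h
      exact ((Nat.modEq_iff_dvd' hlpos).mpr h).symm
    · intro h
      exact (Nat.modEq_iff_dvd' hlpos).mp (Nat.ModEq.symm h)
  have hzero : ∀ b ∈ (Finset.range k).filter
      (fun j => 2 * j < k ∧ j % (2 ^ r - 1) = (l - 1) % (2 ^ r - 1)), b ≠ 0 →
      ((Nat.choose (k - b) b : ZMod 2)) = 0 := by
    intro b hb hb0
    simp only [Finset.mem_filter, Finset.mem_range] at hb
    have := aux_even (s + r * m) k b hk1 (by omega) hb.2.1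
    exact (ZMod.natCast_eq_zero_iff _ 2).mpr this
  by_cases hc : (l - 1) % (2 ^ r - 1) = 0
  · rw [if_pos (hcond.mp hc)]
    have hmem : 0 ∈ (Finset.range k).filter
        (fun j => 2 * j < k ∧ j % (2 ^ r - 1) = (l - 1) % (2 ^ r - 1)) := by
      simp only [Finset.mem_filter, Finset.mem_range]
      refine ⟨by omega, by omega, ?_⟩
      simp [hc]
    rw [Finset.sum_eq_single_of_mem 0 hmem hzero]
    simp
  · rw [if_neg (fun h => hc (hcond.mpr h))]
    refine Finset.sum_eq_zero fun j hj => ?_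
    refine hzero j hj ?_
    rintro rfl
    simp only [Finset.mem_filter, Finset.mem_range] at hj
    exact hc (by simpa using hj.2.2.symm)
end

section
/- Let K be a field of characteristic p > 0, V a finite-dimensional K-vector space, and T : V → V a linear map such that no eigenvalue of T (in an algebraic closure) has algebraic multiplicity divisible by p and positive. Let v be a valuation on K with a fixed extension w to the algebraic closure. Then for any real c: every eigenvalue λ of T satisfies w(λ) ≥ c if and only if v(Tr(T^n)) ≥ c·n for all n ≥ 1. -/
open Finset Polynomial
open scoped Classical

/-!
Over the algebraic closure, `Tr(T^n) = ∑ αᵢⁿ`, so the forward direction is the ultrametric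
inequality. Conversely, let `r` be the Lagrange polynomial that is `1` at `λ = αᵢ` and `0` at the
other eigenvalues. Then `∑ₖ rₖ Tr(T^(N+k)) = m λ^N`, where `m` is the multiplicity of `λ`, which is
nonzero in characteristic `p`. The left side has valuation at least `cN + O(1)`, the right side
exactly `w(m) + N w(λ)`, and letting `N → ∞` gives `w(λ) ≥ c`.
-/

namespace LinearMap

lemma trace_pow_eq_of_isNilpotent_sub_algebraMap {R M : Type*} [CommRing R] [IsReduced R]
    [AddCommGroup M] [Module R M] {g : Module.End R M} (μ : R)
    (hg : IsNilpotent (g - algebraMap R _ μ)) (n : ℕ) :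
    trace R M (g ^ n) = μ ^ n * trace R M 1 := by
  induction n with
  | zero => simp
  | succ n ih =>
    rw [pow_succ, Module.End.mul_eq_comp,
      trace_comp_eq_mul_of_commute_of_isNilpotent μ (Commute.pow_left rfl n) hg, ih, pow_succ]
    ring

variable {K V : Type*} [Field K] [AddCommGroup V] [Module K V] [FiniteDimensional K V]

lemma trace_restrict_maxGenEigenspace_pow (f : Module.End K V) (μ : K) (n : ℕ) :
    trace K _ (f.restrict (f.mapsTo_maxGenEigenspace_of_comm rfl μ) ^ n) =
      μ ^ n * f.charpoly.rootMultiplicity μ := by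
  have hnil := f.isNilpotent_restrict_maxGenEigenspace_sub_algebraMap μ
  rw [trace_pow_eq_of_isNilpotent_sub_algebraMap μ ?_ n, trace_one,
    finrank_maxGenEigenspace_eq]
  convert hnil using 1
  ext x
  rfl

lemma trace_pow_eq_sum_roots_charpoly [IsAlgClosed K] (f : Module.End K V) (n : ℕ) :
    trace K V (f ^ n) = (f.charpoly.roots.map (· ^ n)).sum := by
  have hN : {μ | f.maxGenEigenspace μ ≠ ⊥}.Finite :=
    WellFoundedGT.finite_ne_bot_of_iSupIndep f.independent_maxGenEigenspace
  have hsupp : hN.toFinset = f.charpoly.roots.toFinset := by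
    ext μ
    rw [Set.Finite.mem_toFinset, Set.mem_ofPred_eq, Multiset.mem_toFinset,
      mem_roots f.charpoly_monic.ne_zero, ← rootMultiplicity_pos f.charpoly_monic.ne_zero,
      ← finrank_maxGenEigenspace_eq, Nat.pos_iff_ne_zero, Ne, Ne,
      Submodule.finrank_eq_zero]
  have hint := DirectSum.isInternal_submodule_of_iSupIndep_of_iSup_eq_top
    f.independent_maxGenEigenspace f.iSup_maxGenEigenspace_eq_top
  rw [trace_eq_sum_trace_restrict' hint hN fun μ ↦
      f.mapsTo_maxGenEigenspace_of_comm (Commute.pow_right rfl n) μ, hsupp,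
    Finset.sum_multiset_map_count]
  refine Finset.sum_congr rfl fun μ _ ↦ ?_
  rw [← Module.End.pow_restrict n (f.mapsTo_maxGenEigenspace_of_comm rfl μ),
    trace_restrict_maxGenEigenspace_pow, count_roots, nsmul_eq_mul, mul_comm]

lemma algebraMap_trace_pow_eq_sum {L ι : Type*} [Field L] [Algebra K L] [IsAlgClosed L]
    [Fintype ι] (T : Module.End K V) (α : ι → L)
    (hα : T.charpoly.map (algebraMap K L) = ∏ i, (X - C (α i))) (n : ℕ) :
    algebraMap K L (trace K V (T ^ n)) = ∑ i, α i ^ n := by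
  have hprod : ∏ i, (X - C (α i)) = ((univ.val.map α).map fun a ↦ X - C a).prod := by
    rw [Multiset.map_map]
    rfl
  rw [← trace_baseChange, baseChange_pow, trace_pow_eq_sum_roots_charpoly, charpoly_baseChange, hα,
    hprod, roots_multiset_prod_X_sub_C, Multiset.map_map]
  rfl

end LinearMap

namespace Polynomial

lemma sum_range_coeff_mul_sum_pow {R ι : Type*} [CommSemiring R] (s : Finset ι) (r : R[X])
    (α : ι → R) (N : ℕ) :
    ∑ k ∈ range (r.natDegree + 1), r.coeff k * ∑ j ∈ s, α j ^ (N + k) =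
      ∑ j ∈ s, r.eval (α j) * α j ^ N := by
  simp_rw [eval_eq_sum_range (α _), Finset.mul_sum, Finset.sum_mul]
  rw [Finset.sum_comm]
  exact sum_congr rfl fun j _ ↦ sum_congr rfl fun k _ ↦ by ring

end Polynomial

lemma WithTop.le_of_forall_le_add_nsmul {A t : WithTop ℝ} (hA : A ≠ ⊤) {b c : ℝ}
    (h : ∀ N : ℕ, 1 ≤ N → ((c * N + b : ℝ) : WithTop ℝ) ≤ A + N • t) : (c : WithTop ℝ) ≤ t := by
  lift A to ℝ using hA
  induction t using WithTop.recTopCoe with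
  | top => exact le_top
  | coe t =>
    rw [WithTop.coe_le_coe]
    by_contra! hlt
    obtain ⟨n, hn⟩ := exists_lt_nsmul (sub_pos.2 hlt) (A - b)
    have hN := h (n + 1) (by omega)
    rw [← WithTop.coe_nsmul, ← WithTop.coe_add, WithTop.coe_le_coe, nsmul_eq_mul] at hN
    rw [nsmul_eq_mul] at hn
    push_cast at hN
    nlinarith

namespace AddValuation

variable {L : Type*}

lemma le_map_sum_pow [CommRing L] (v : AddValuation L (WithTop ℝ)) {ι : Type*} (s : Finset ι)
    (α : ι → L) {c : ℝ} (h : ∀ i ∈ s, (c : WithTop ℝ) ≤ v (α i)) (n : ℕ) :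
    ((c * n : ℝ) : WithTop ℝ) ≤ v (∑ i ∈ s, α i ^ n) := by
  refine v.map_le_sum fun i hi ↦ ?_
  rw [v.map_pow, mul_comm, ← nsmul_eq_mul, WithTop.coe_nsmul]
  exact nsmul_le_nsmul_right (h i hi) n

lemma exists_le_map_sum_coeff_mul [CommRing L] (v : AddValuation L (WithTop ℝ)) (r : L[X])
    (p : ℕ → L) {c : ℝ} (h : ∀ n : ℕ, 1 ≤ n → ((c * n : ℝ) : WithTop ℝ) ≤ v (p n)) :
    ∃ b : ℝ, ∀ N : ℕ, 1 ≤ N →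
      ((c * N + b : ℝ) : WithTop ℝ) ≤ v (∑ k ∈ range (r.natDegree + 1), r.coeff k * p (N + k)) := by
  let B := (range (r.natDegree + 1)).inf fun k ↦ v (r.coeff k) + (c * k : ℝ)
  refine ⟨B.untopD 0, fun N hN ↦ v.map_le_sum fun k hk ↦ ?_⟩
  calc ((c * N + B.untopD 0 : ℝ) : WithTop ℝ)
      ≤ (c * N : ℝ) + (v (r.coeff k) + (c * k : ℝ)) := by
        rw [WithTop.coe_add]
        gcongr
        exact (WithTop.coe_untopD_le _ _).trans (inf_le hk)
    _ = v (r.coeff k) + (c * (N + k) : ℝ) := by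
        rw [mul_add, WithTop.coe_add]
        abel
    _ ≤ v (r.coeff k) + v (p (N + k)) := by
        gcongr
        exact_mod_cast h (N + k) (by omega)
    _ = v (r.coeff k * p (N + k)) := (v.map_mul _ _).symm

theorem le_map_of_le_map_sum_pow [Field L] (v : AddValuation L (WithTop ℝ)) {ι : Type*}
    [Fintype ι] (α : ι → L) (i : ι) (hm : (#{j | α j = α i} : L) ≠ 0) {c : ℝ}
    (h : ∀ n : ℕ, 1 ≤ n → ((c * n : ℝ) : WithTop ℝ) ≤ v (∑ j, α j ^ n)) :
    (c : WithTop ℝ) ≤ v (α i) := by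
  let r := Lagrange.basis (univ.image α) id (α i)
  have hr : ∀ j, r.eval (α j) = if α j = α i then 1 else 0 := by
    intro j
    split_ifs with hj
    · rw [hj]
      exact Lagrange.eval_basis_self (Set.injOn_id _) (mem_image_of_mem α (mem_univ i))
    · exact Lagrange.eval_basis_of_ne (v := id) (Ne.symm hj) (mem_image_of_mem α (mem_univ j))
  have key : ∀ N, ∑ k ∈ range (r.natDegree + 1), r.coeff k * ∑ j, α j ^ (N + k) =
      #{j | α j = α i} * α i ^ N := by
    intro N
    simp_rw [Polynomial.sum_range_coeff_mul_sum_pow, hr, ite_mul, one_mul, zero_mul,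
      ← Finset.sum_filter]
    rw [sum_congr rfl fun j hj ↦ by rw [(mem_filter.1 hj).2], sum_const, nsmul_eq_mul]
  obtain ⟨b, hb⟩ := v.exists_le_map_sum_coeff_mul r _ h
  refine WithTop.le_of_forall_le_add_nsmul (v.ne_top_iff.2 hm) (b := b) fun N hN ↦ ?_
  rw [← v.map_pow, ← v.map_mul, ← key]
  exact hb N hN

end AddValuation

theorem stmt17_general (K : Type*) [Field K] (p : ℕ) (hchar : CharP K p)
    (V : Type*) [AddCommGroup V] [Module K V] [FiniteDimensional K V]
    (T : V →ₗ[K] V) (d : ℕ)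
    (α : Fin d → AlgebraicClosure K)
    (hα : (LinearMap.charpoly T).map (algebraMap K (AlgebraicClosure K)) =
      ∏ i : Fin d, (X - C (α i)))
    (hmult : ∀ i : Fin d, ¬ p ∣ (Finset.univ.filter (fun j => α j = α i)).card)
    (v : K → WithTop ℝ) (w : AlgebraicClosure K → WithTop ℝ)
    (hw0 : w 0 = ⊤) (hw1 : w 1 = 0)
    (hwmul : ∀ x y, w (x * y) = w x + w y)
    (hwadd : ∀ x y, min (w x) (w y) ≤ w (x + y))
    (hext : ∀ x : K, w (algebraMap K (AlgebraicClosure K) x) = v x)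
    (c : ℝ) :
    (∀ i : Fin d, (c : WithTop ℝ) ≤ w (α i)) ↔
      ∀ n : ℕ, 1 ≤ n → ((c * n : ℝ) : WithTop ℝ) ≤ v (LinearMap.trace K V (T ^ n)) := by
  have := charP_of_injective_algebraMap (algebraMap K (AlgebraicClosure K)).injective p
  let w' := AddValuation.of w hw0 hw1 hwadd hwmul
  have htrace (n : ℕ) : v (LinearMap.trace K V (T ^ n)) = w' (∑ i, α i ^ n) := by
    rw [← hext, T.algebraMap_trace_pow_eq_sum α hα]
    rfl
  simp_rw [htrace]
  refine ⟨fun h n _ ↦ w'.le_map_sum_pow univ α (fun i _ ↦ h i) n, fun h i ↦ ?_⟩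
  refine w'.le_map_of_le_map_sum_pow α i ?_ h
  rw [Ne, CharP.cast_eq_zero_iff _ p]
  exact hmult i

/-- Let `K` be a field of characteristic `p > 0`, `V` a finite-dimensional `K`-vector space,
and `T : V → V` a linear map whose eigenvalues `α₁, …, α_d` (in an algebraic closure, with
multiplicity) all have algebraic multiplicity not divisible by `p`. Let `v` be a (rank-one,
real-valued, additive) valuation on `K` and `w` an extension to the algebraic closure. Then
for any real `c`: every eigenvalue `λ` satisfies `w(λ) ≥ c` iff `v(Tr(T^n)) ≥ c·n` for all
`n ≥ 1`. -/
theorem stmt17 (K : Type*) [Field K] (p : ℕ) (hp : p.Prime) (hchar : CharP K p)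
    (V : Type*) [AddCommGroup V] [Module K V] [FiniteDimensional K V]
    (T : V →ₗ[K] V) (d : ℕ) (hd : Module.finrank K V = d)
    (α : Fin d → AlgebraicClosure K)
    (hα : (LinearMap.charpoly T).map (algebraMap K (AlgebraicClosure K)) =
      ∏ i : Fin d, (X - C (α i)))
    (hmult : ∀ i : Fin d, ¬ p ∣ (Finset.univ.filter (fun j => α j = α i)).card)
    (v : K → WithTop ℝ) (w : AlgebraicClosure K → WithTop ℝ)
    (hw0 : w 0 = ⊤) (hw1 : w 1 = 0)
    (hwmul : ∀ x y, w (x * y) = w x + w y)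
    (hwadd : ∀ x y, min (w x) (w y) ≤ w (x + y))
    (hext : ∀ x : K, w (algebraMap K (AlgebraicClosure K) x) = v x)
    (c : ℝ) :
    (∀ i : Fin d, (c : WithTop ℝ) ≤ w (α i)) ↔
      ∀ n : ℕ, 1 ≤ n → ((c * n : ℝ) : WithTop ℝ) ≤ v (LinearMap.trace K V (T ^ n)) :=
  stmt17_general K p hchar V T d α hα hmult v w hw0 hw1 hwmul hwadd hext c
end

section
/- For q = 2, the inequality N(k) ≤ ⌈(k-2)/3⌉ holds for all k ≥ 3, where N(k) = #{ j ∈ ℕ : 2j < k - 2, and C(k - 2 - j, j) is odd }; moreover this inequality is strict for all k ≥ 128. -/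
/-!
Let `s n` count the odd binomials `C(n-1-j, j)` on the `n`-th rising diagonal of Pascal's triangle,
so that `N(k) = s (k-1) - [k even]` (for even `k` the omitted term is `C(j, j) = 1`). Lucas'
theorem mod 2 shows that `s` is Stern's diatomic sequence: `s (2m) = s m` and
`s (2m+1) = s m + s (m+1)`. These recurrences propagate `s n ≤ (n+1)/3 + n % 2` by induction,
which is the weak inequality. For the strict one, `s n ≤ F (k+1)` whenever `n ≤ 2^k`, and
`3 F (k+2) < 2^k` for `k ≥ 6`, so `s n < (n+1)/3` as soon as `n > 64`.
-/

open Finset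

theorem odd_choose_iff (n k : ℕ) :
    Odd (n.choose k) ↔ k % 2 ≤ n % 2 ∧ Odd ((n / 2).choose (k / 2)) := by
  have lucas := @Choose.choose_modEq_choose_mod_mul_choose_div_nat n k 2 ⟨Nat.prime_two⟩
  rw [Nat.odd_iff, lucas, ← Nat.odd_iff, Nat.odd_mul]
  refine and_congr_left fun _ => ?_
  rcases Nat.mod_two_eq_zero_or_one n with hn | hn <;>
    rcases Nat.mod_two_eq_zero_or_one k with hk | hk <;> simp [hn, hk]

def oddDiagonal (n : ℕ) : Finset ℕ :=
  (range n).filter fun j => 2 * j < n ∧ Odd ((n - 1 - j).choose j)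

theorem mem_oddDiagonal {n j : ℕ} :
    j ∈ oddDiagonal n ↔ 2 * j < n ∧ Odd ((n - 1 - j).choose j) := by
  simp only [oddDiagonal, mem_filter, mem_range, and_iff_right_iff_imp]
  omega

theorem two_mul_mem_oddDiagonal_two_mul {m i : ℕ} :
    2 * i ∈ oddDiagonal (2 * m) ↔ i ∈ oddDiagonal m := by
  rw [mem_oddDiagonal, mem_oddDiagonal, show 2 * (2 * i) < 2 * m ↔ 2 * i < m by omega]
  refine and_congr_right fun hi => ?_
  rw [odd_choose_iff, show 2 * m - 1 - 2 * i = 2 * (m - 1 - i) + 1 by omega]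
  simp [Nat.mul_add_div]

theorem two_mul_add_one_notMem_oddDiagonal_two_mul {m i : ℕ} :
    2 * i + 1 ∉ oddDiagonal (2 * m) := by
  rw [mem_oddDiagonal, odd_choose_iff, show 2 * m - 1 - (2 * i + 1) = 2 * (m - 1 - i) by omega]
  simp

theorem two_mul_mem_oddDiagonal_two_mul_add_one {m i : ℕ} :
    2 * i ∈ oddDiagonal (2 * m + 1) ↔ i ∈ oddDiagonal (m + 1) := by
  rw [mem_oddDiagonal, mem_oddDiagonal, show 2 * (2 * i) < 2 * m + 1 ↔ 2 * i < m + 1 by omega]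
  refine and_congr_right fun hi => ?_
  rw [odd_choose_iff, show 2 * m + 1 - 1 - 2 * i = 2 * (m + 1 - 1 - i) by omega]
  simp

theorem two_mul_add_one_mem_oddDiagonal_two_mul_add_one {m i : ℕ} :
    2 * i + 1 ∈ oddDiagonal (2 * m + 1) ↔ i ∈ oddDiagonal m := by
  rw [mem_oddDiagonal, mem_oddDiagonal, show 2 * (2 * i + 1) < 2 * m + 1 ↔ 2 * i < m by omega]
  refine and_congr_right fun hi => ?_
  rw [odd_choose_iff, show 2 * m + 1 - 1 - (2 * i + 1) = 2 * (m - 1 - i) + 1 by omega]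
  simp [Nat.mul_add_div]

theorem card_eq_card_add_card_of_halves {T A B : Finset ℕ}
    (hA : ∀ i, 2 * i ∈ T ↔ i ∈ A) (hB : ∀ i, 2 * i + 1 ∈ T ↔ i ∈ B) :
    #T = #A + #B := by
  have hT : T = A.image (2 * ·) ∪ B.image (2 * · + 1) := by
    ext j
    obtain ⟨i, rfl | rfl⟩ := Nat.even_or_odd' j <;> grind
  rw [hT, card_union_of_disjoint, card_image_of_injective _ (fun a b h => by simpa using h),
    card_image_of_injective _ (fun a b h => by simpa using h)]
  simp only [disjoint_left, mem_image]
  rintro _ ⟨a, -, rfl⟩ ⟨b, -, h⟩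
  omega

theorem three_mul_fib_add_two_lt_two_pow {k : ℕ} (hk : 6 ≤ k) : 3 * Nat.fib (k + 2) < 2 ^ k := by
  induction k, hk using Nat.le_induction with
  | base => decide
  | succ k hk ih =>
    have := Nat.fib_mono (show k + 1 ≤ k + 2 by omega)
    rw [pow_succ, Nat.fib_add_two, show k + 1 + 1 = k + 2 from rfl]
    omega

section SternRecurrence

variable {s : ℕ → ℕ} (hs_even : ∀ m, s (2 * m) = s m)
  (hs_odd : ∀ m, s (2 * m + 1) = s m + s (m + 1))
include hs_odd

theorem stern_zero : s 0 = 0 := by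
  simpa using hs_odd 0

include hs_even

theorem stern_le_div_three_add_mod_two (h1 : s 1 ≤ 1) (n : ℕ) : s n ≤ (n + 1) / 3 + n % 2 := by
  induction n using Nat.strong_induction_on with
  | _ n ih =>
    obtain ⟨m, rfl | rfl⟩ := Nat.even_or_odd' n
    · rcases m.eq_zero_or_pos with rfl | hm
      · simp [stern_zero hs_odd]
      · have ihm := ih m (by omega)
        rw [hs_even]
        omega
    · rcases m.eq_zero_or_pos with rfl | hm
      · simpa using h1
      · have ihm := ih m (by omega)
        have ihm1 := ih (m + 1) (by omega)
        rw [hs_odd]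
        -- all floors and parities involved are determined by `m % 6`
        have : m % 6 < 6 := Nat.mod_lt m (by norm_num)
        interval_cases h : m % 6 <;> omega

/-- A bound on `s n` alone does not survive `s (2m+1) = s m + s (m+1)`; one on the sum of two
consecutive values does. -/
theorem stern_add_stern_succ_le_fib (k : ℕ) :
    ∀ n < 2 ^ k, s n + s (n + 1) ≤ s 1 * Nat.fib (k + 2) ∧
      s n ≤ s 1 * Nat.fib (k + 1) ∧ s (n + 1) ≤ s 1 * Nat.fib (k + 1) := by
  induction k with
  | zero =>
    intro n hn
    obtain rfl : n = 0 := by simpa using hn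
    simp [stern_zero hs_odd]
  | succ k ih =>
    show ∀ n < 2 ^ (k + 1), s n + s (n + 1) ≤ s 1 * Nat.fib (k + 3) ∧
      s n ≤ s 1 * Nat.fib (k + 2) ∧ s (n + 1) ≤ s 1 * Nat.fib (k + 2)
    intro n hn
    have hfib : s 1 * Nat.fib (k + 3) = s 1 * Nat.fib (k + 1) + s 1 * Nat.fib (k + 2) := by
      rw [Nat.fib_add_two, mul_add]
    have hmono : s 1 * Nat.fib (k + 1) ≤ s 1 * Nat.fib (k + 2) :=
      Nat.mul_le_mul_left _ (Nat.fib_mono (by omega))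
    obtain ⟨m, rfl | rfl⟩ := Nat.even_or_odd' n
    · have := ih m (by rw [pow_succ] at hn; omega)
      rw [hs_even, hs_odd]
      omega
    · have := ih m (by rw [pow_succ] at hn; omega)
      rw [show 2 * m + 1 + 1 = 2 * (m + 1) by ring, hs_even, hs_odd]
      omega

theorem stern_le_fib {n k : ℕ} (hn : n ≤ 2 ^ k) : s n ≤ s 1 * Nat.fib (k + 1) := by
  rcases n.eq_zero_or_pos with rfl | hpos
  · simp [stern_zero hs_odd]
  · obtain ⟨n, rfl⟩ := Nat.exists_eq_succ_of_ne_zero hpos.ne'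
    exact (stern_add_stern_succ_le_fib hs_even hs_odd k n (by omega)).2.2

theorem stern_lt_div_three (h1 : s 1 ≤ 1) {n : ℕ} (hn : 65 ≤ n) : s n < (n + 1) / 3 := by
  set k := Nat.log 2 (n - 1)
  have hk : 6 ≤ k := Nat.le_log_of_pow_le one_lt_two (by omega)
  have hlow : 2 ^ k ≤ n - 1 := Nat.pow_log_le_self 2 (by omega)
  have hhigh : n - 1 < 2 ^ (k + 1) := Nat.lt_pow_succ_log_self one_lt_two _
  have hfib : s n ≤ Nat.fib (k + 2) :=
    (stern_le_fib hs_even hs_odd (by omega)).trans (mul_le_of_le_one_left (Nat.zero_le _) h1)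
  have := three_mul_fib_add_two_lt_two_pow hk
  omega

end SternRecurrence

theorem card_oddDiagonal_two_mul (m : ℕ) : #(oddDiagonal (2 * m)) = #(oddDiagonal m) := by
  rw [card_eq_card_add_card_of_halves (B := ∅) (fun _ => two_mul_mem_oddDiagonal_two_mul)
    (fun _ => iff_of_false two_mul_add_one_notMem_oddDiagonal_two_mul (notMem_empty _)),
    card_empty, add_zero]

theorem card_oddDiagonal_two_mul_add_one (m : ℕ) :
    #(oddDiagonal (2 * m + 1)) = #(oddDiagonal m) + #(oddDiagonal (m + 1)) := by
  rw [card_eq_card_add_card_of_halves (fun _ => two_mul_mem_oddDiagonal_two_mul_add_one)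
    (fun _ => two_mul_add_one_mem_oddDiagonal_two_mul_add_one), add_comm]

theorem card_oddDiagonal_one : #(oddDiagonal 1) = 1 := by
  decide

theorem card_filter_add_eq_card_oddDiagonal {k : ℕ} (hk : k ≠ 0) :
    #((range k).filter fun j => 2 * j < k - 2 ∧ Odd ((k - 2 - j).choose j)) + (k + 1) % 2 =
      #(oddDiagonal (k - 1)) := by
  obtain ⟨m, rfl | rfl⟩ := Nat.even_or_odd' k
  · obtain ⟨m, rfl⟩ := Nat.exists_eq_succ_of_ne_zero (by omega : m ≠ 0)
    have hinsert : oddDiagonal (2 * (m + 1) - 1) =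
        insert m ((range (2 * (m + 1))).filter
          fun j => 2 * j < 2 * (m + 1) - 2 ∧ Odd ((2 * (m + 1) - 2 - j).choose j)) := by
      ext j
      simp only [mem_insert, mem_filter, mem_range, mem_oddDiagonal, Nat.sub_sub]
      rcases eq_or_ne j m with rfl | hj
      · refine iff_of_true ⟨by omega, ?_⟩ (.inl rfl)
        rw [show 2 * (j + 1) - (1 + 1 + j) = j by omega, Nat.choose_self]
        exact odd_one
      · simp only [hj, false_or]
        grind
    have hm : m ∉ (range (2 * (m + 1))).filter
        fun j => 2 * j < 2 * (m + 1) - 2 ∧ Odd ((2 * (m + 1) - 2 - j).choose j) :=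
      fun h => by have := (mem_filter.1 h).2.1; omega
    rw [hinsert, card_insert_of_notMem hm, show (2 * (m + 1) + 1) % 2 = 1 by omega]
  · have heq : (range (2 * m + 1)).filter
        (fun j => 2 * j < 2 * m + 1 - 2 ∧ Odd ((2 * m + 1 - 2 - j).choose j)) =
          oddDiagonal (2 * m) := by
      ext j
      simp only [mem_filter, mem_range, mem_oddDiagonal, Nat.sub_sub]
      grind
    rw [heq, show (2 * m + 1 + 1) % 2 = 0 by omega, add_zero, Nat.add_sub_cancel]

/-- For `q = 2`: with `N(k) = #{ j ∈ ℕ : 2j < k - 2, C(k - 2 - j, j) odd }`, the inequality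
`N(k) ≤ ⌈(k-2)/3⌉` holds for all `k ≥ 3`, and it is strict for all `k ≥ 128`. -/
theorem stmt19 (k : ℕ) (hk : 3 ≤ k) :
    ((((Finset.range k).filter
        (fun j => 2 * j < k - 2 ∧ Odd (Nat.choose (k - 2 - j) j))).card : ℤ)
      ≤ ⌈((k : ℚ) - 2) / 3⌉) ∧
      (128 ≤ k →
        ((((Finset.range k).filter
            (fun j => 2 * j < k - 2 ∧ Odd (Nat.choose (k - 2 - j) j))).card : ℤ)
          < ⌈((k : ℚ) - 2) / 3⌉)) := by
  have hceil : ⌈((k : ℚ) - 2) / 3⌉ = -((2 - k) / 3) := by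
    have := Rat.ceil_intCast_div_natCast ((k : ℤ) - 2) 3
    push_cast at this
    rwa [neg_sub] at this
  have hcard := card_filter_add_eq_card_oddDiagonal (k := k) (by omega)
  have hle := stern_le_div_three_add_mod_two (s := fun n => #(oddDiagonal n))
    card_oddDiagonal_two_mul card_oddDiagonal_two_mul_add_one card_oddDiagonal_one.le (k - 1)
  have hlt := fun h : 128 ≤ k => stern_lt_div_three (s := fun n => #(oddDiagonal n))
    card_oddDiagonal_two_mul card_oddDiagonal_two_mul_add_one card_oddDiagonal_one.le
    (n := k - 1) (by omega)
  rw [hceil]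
  omega
end
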